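/- For all planar binary trees x ∈ Y_m and y ∈ Y_n, the map (x′, y′) ↦ x′/y′ is a bijection from {x′ ∈ Y_m : x′ ≤ x} × {y′ ∈ Y_n : y′ ≤ y} onto {z ∈ Y_{m+n} : z ≤ x/y}, where ≤ is the Tamari order. -/

import Mathlib

/-- A planar binary tree: either the trivial tree (a leaf) or an ordered pair of
planar binary trees. -/
inductive PBT : Type
  | leaf : PBT
  | node : PBT → PBT → PBT
  deriving DecidableEq

namespace PBT

/-- Number of internal vertices of a planar binary tree. -/
def size : PBT → ℕ
  | leaf => 0
  | node a b => a.size + b.size + 1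

/-- One covering move of the Tamari order: `Rot x y` holds when `y` is obtained
from `x` by replacing some subtree of the form `((a,b),c)` by `(a,(b,c))`. -/
inductive Rot : PBT → PBT → Prop
  | rot (a b c : PBT) : Rot (node (node a b) c) (node a (node b c))
  | left {a a' : PBT} (b : PBT) : Rot a a' → Rot (node a b) (node a' b)
  | right (a : PBT) {b b' : PBT} : Rot b b' → Rot (node a b) (node a b')

/-- The Tamari order: reflexive-transitive closure of `Rot`. -/
def tle (x y : PBT) : Prop := Relation.ReflTransGen Rot x y

/-- Grafting of `x` on the leftmost leaf of `y` : the operation `x / y`. -/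
def over' : PBT → PBT → PBT
  | x, leaf => x
  | x, node y₁ y₂ => node (over' x y₁) y₂

/-- Grafting of `y` on the rightmost leaf of `x` : the operation `x ∖ y`. -/
def under : PBT → PBT → PBT
  | leaf, y => y
  | node x₁ x₂, y => node x₁ (under x₂ y)

theorem Rot.size_eq {x y : PBT} (h : Rot x y) : x.size = y.size := by
  induction h <;> simp [size] <;> omega

theorem tle.size_eq {x y : PBT} (h : tle x y) : x.size = y.size := by
  induction h with
  | refl => rfl
  | tail _ h ih => rw [ih, h.size_eq]

theorem finite_size_le (n : ℕ) : {z : PBT | z.size ≤ n}.Finite := by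
  induction n with
  | zero =>
    apply Set.Finite.subset (Set.finite_singleton leaf)
    rintro (_ | ⟨a, b⟩) hz
    · simp
    · simp [size] at hz
  | succ n ih =>
    apply Set.Finite.subset ((Set.Finite.image2 node ih ih).insert leaf)
    rintro (_ | ⟨a, b⟩) hz
    · simp
    · simp only [Set.mem_setOf_eq, size] at hz
      exact Set.mem_insert_iff.mpr
        (Or.inr (Set.mem_image2.mpr ⟨a, by simp only [Set.mem_setOf_eq]; omega, b, by simp only [Set.mem_setOf_eq]; omega, rfl⟩))

theorem finite_size (n : ℕ) : {z : PBT | z.size = n}.Finite :=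
  (finite_size_le n).subset fun _ hz => le_of_eq hz

theorem finite_tle_right (x : PBT) : {y : PBT | tle y x}.Finite :=
  (finite_size x.size).subset fun _ hy => hy.size_eq

theorem finite_tle_left (x : PBT) : {y : PBT | tle x y}.Finite :=
  (finite_size x.size).subset fun _ hy => hy.size_eq.symm

theorem finite_interval (x y : PBT) :
    {z : PBT | tle (over' x y) z ∧ tle z (under x y)}.Finite :=
  (finite_tle_right (under x y)).subset fun _ hz => hz.2

end PBT

/-- The free abelian group `ℤY = ⊕ₙ ℤYₙ` on the set of all planar binary trees. -/
abbrev ZY : Type := PBT →₀ ℤ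

namespace PBT

/-- The basis element `S_x` of `ℤY`. -/
noncomputable def S (x : PBT) : ZY := Finsupp.single x 1

/-- The class `P_x = ∑_{y ≤ x} S_y` of the projective module. -/
noncomputable def P (x : PBT) : ZY := ∑ y ∈ (finite_tle_right x).toFinset, S y

/-- The class `I_x = ∑_{y ≥ x} S_y` of the injective module. -/
noncomputable def I (x : PBT) : ZY := ∑ y ∈ (finite_tle_left x).toFinset, S y

/-- The Loday-Ronco product on basis elements:
`S_x * S_y = ∑_{x/y ≤ z ≤ x∖y} S_z`. -/
noncomputable def starB (x y : PBT) : ZY := ∑ z ∈ (finite_interval x y).toFinset, S z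

/-- Bilinear extension of a product defined on basis elements. -/
noncomputable def bilin (f : PBT → PBT → ZY) (a b : ZY) : ZY :=
  a.sum fun x ax => b.sum fun y byy => (ax * byy) • f x y

/-- The product `/` on `ℤY`, with `S_x / S_y = S_{x/y}`. -/
noncomputable def overM : ZY → ZY → ZY := bilin fun x y => S (x.over' y)

/-- The product `∖` on `ℤY`, with `S_x ∖ S_y = S_{x∖y}`. -/
noncomputable def underM : ZY → ZY → ZY := bilin fun x y => S (x.under y)

/-- The Loday-Ronco product `*` on `ℤY`. -/
noncomputable def starM : ZY → ZY → ZY := bilin starB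

/-- The unique planar binary tree `•` with one internal vertex. -/
def dot : PBT := node leaf leaf

end PBT

/-!
Grafting is monotone in both arguments, because a rotation inside `x` or inside `y` is still a
rotation inside `x / y`. Conversely, every rotation leading to `x / y` takes place either inside
the grafted copy of `x` or in the part of the tree coming from `y`, so the trees below `x / y` are
exactly the grafts `x' / y'` with `x' ≤ x` and `y' ≤ y`. Injectivity holds because `x / y`
determines `y` once the size of `x` is fixed.
-/

namespace PBT

theorem size_over' (x y : PBT) : (x.over' y).size = x.size + y.size := by
  induction y with
  | leaf => rfl
  | node a b iha _ => simp only [over', size, iha]; omega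

theorem over'_inj {x₁ x₂ y₁ y₂ : PBT} (hs : x₁.size = x₂.size) :
    x₁.over' y₁ = x₂.over' y₂ ↔ x₁ = x₂ ∧ y₁ = y₂ := by
  refine ⟨fun h => ?_, fun ⟨hx, hy⟩ => hx ▸ hy ▸ rfl⟩
  induction y₁ generalizing y₂ with
  | leaf =>
    cases y₂ with
    | leaf => exact ⟨h, rfl⟩
    | node c d =>
      have := congrArg size h
      simp only [over', size_over', size] at this
      omega
  | node a b iha _ =>
    cases y₂ with
    | leaf =>
      have := congrArg size h
      simp only [over', size_over', size] at this
      omega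
    | node c d =>
      obtain ⟨h₁, rfl⟩ := node.inj h
      obtain ⟨hx, rfl⟩ := iha h₁
      exact ⟨hx, rfl⟩

theorem Rot.over'_left {x x' : PBT} (h : Rot x x') (y : PBT) :
    Rot (x.over' y) (x'.over' y) := by
  induction y with
  | leaf => exact h
  | node _ b ih _ => exact Rot.left b ih

theorem Rot.over'_right (x : PBT) {y y' : PBT} (h : Rot y y') :
    Rot (x.over' y) (x.over' y') := by
  induction h with
  | rot a b c => exact Rot.rot (x.over' a) b c
  | left b _ ih => exact Rot.left b ih
  | right a hb _ => exact Rot.right (x.over' a) hb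

theorem tle.node_left {a a' : PBT} (h : tle a a') (b : PBT) : tle (node a b) (node a' b) :=
  Relation.ReflTransGen.lift (fun t => node t b) (fun _ _ h => Rot.left b h) _ _ h

theorem tle.over'_mono {x x' y y' : PBT} (hx : tle x x') (hy : tle y y') :
    tle (x.over' y) (x'.over' y') :=
  Relation.ReflTransGen.trans (r := Rot)
    (Relation.ReflTransGen.lift (fun t => t.over' y) (fun _ _ h => Rot.over'_left h y) _ _ hx)
    (Relation.ReflTransGen.lift (fun t => x'.over' t) (fun _ _ h => Rot.over'_right x' h) _ _ hy)

theorem Rot.exists_over'_of_rot_over' {z x y : PBT} (h : Rot z (x.over' y)) :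
    ∃ x' y', z = x'.over' y' ∧ tle x' x ∧ tle y' y := by
  induction y generalizing z with
  | leaf => exact ⟨z, leaf, rfl, .single h, .refl⟩
  | node y₁ y₂ ih _ =>
    change Rot z (node (x.over' y₁) y₂) at h
    cases h with
    | rot _ q r =>
      -- `z = ((x / y₁, q), r)`, which is `x / ((y₁, q), r)`
      exact ⟨x, node (node y₁ q) r, rfl, .refl, .single (Rot.rot y₁ q r)⟩
    | left _ hz =>
      obtain ⟨x', y₁', rfl, hx, hy⟩ := ih hz
      exact ⟨x', node y₁' y₂, rfl, hx, hy.node_left y₂⟩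
    | right _ hz =>
      exact ⟨x, node y₁ _, rfl, .refl, .single (Rot.right y₁ hz)⟩

theorem tle.exists_over'_of_le_over' {z x y : PBT} (h : tle z (x.over' y)) :
    ∃ x' y', z = x'.over' y' ∧ tle x' x ∧ tle y' y := by
  induction h using Relation.ReflTransGen.head_induction_on with
  | refl => exact ⟨x, y, rfl, .refl, .refl⟩
  | head hzw _ ih =>
    obtain ⟨x', y', rfl, hx, hy⟩ := ih
    obtain ⟨x'', y'', rfl, hx', hy'⟩ := hzw.exists_over'_of_rot_over'
    exact ⟨x'', y'', rfl, hx'.trans hx, hy'.trans hy⟩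

end PBT

open PBT in
/-- For `x ∈ Y_m` and `y ∈ Y_n`, the map `(x', y') ↦ x'/y'` is a bijection from
`{x' ∈ Y_m : x' ≤ x} × {y' ∈ Y_n : y' ≤ y}` onto `{z ∈ Y_{m+n} : z ≤ x/y}`. -/
theorem over_bijOn_tamari (m n : ℕ) (x y : PBT) (hx : x.size = m) (hy : y.size = n) :
    Set.BijOn (fun p : PBT × PBT => p.1.over' p.2)
      ({x' : PBT | x'.size = m ∧ tle x' x} ×ˢ {y' : PBT | y'.size = n ∧ tle y' y})
      {z : PBT | z.size = m + n ∧ tle z (x.over' y)} := by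
  refine ⟨?_, ?_, ?_⟩
  · rintro ⟨x', y'⟩ ⟨⟨rfl, hx'⟩, ⟨rfl, hy'⟩⟩
    exact ⟨size_over' x' y', hx'.over'_mono hy'⟩
  · rintro ⟨x₁, y₁⟩ ⟨⟨h₁, -⟩, -⟩ ⟨x₂, y₂⟩ ⟨⟨h₂, -⟩, -⟩ h
    obtain ⟨rfl, rfl⟩ := (over'_inj (h₁.trans h₂.symm)).mp h
    rfl
  · rintro z ⟨-, hz⟩
    obtain ⟨x', y', rfl, hx', hy'⟩ := hz.exists_over'_of_le_over'
    exact ⟨(x', y'), ⟨⟨hx'.size_eq.trans hx, hx'⟩, ⟨hy'.size_eq.trans hy, hy'⟩⟩, rfl⟩
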